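/- arXiv:2309.15856 — 2 statements merged into one kernel-verified Lean document; each statement's English description precedes it below -/
import Mathlib

section
/- Let m be a positive integer, N = 2^m, d = m + 2, and D = 2^d. For nonnegative integers x_i, y_i, v < N (i = 1,...,n) and integers v_1,...,v_n with 4·∑_{i=1}^n v_i ≡ 4v (mod D), define p_i = 2x_i + 1, q_i = 2y_i + 1, s_i = (4v_i − 2y_i − 1) mod D, and M_i = (s_i + p_i·q_i) mod D. Then ∑_{i=1}^n (M_i − 2x_i) mod D is divisible by 4, and (∑_{i=1}^n (M_i − 2x_i) mod D)/4 = (v + ∑_{i=1}^n x_i·y_i) mod N. -/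
open Finset

theorem protocol_correctness
    (m n : ℕ) (hm : 0 < m)
    (x y : Fin n → ℤ) (v : ℤ)
    (hx : ∀ i, 0 ≤ x i ∧ x i < 2 ^ m)
    (hy : ∀ i, 0 ≤ y i ∧ y i < 2 ^ m)
    (hv : 0 ≤ v ∧ v < 2 ^ m)
    (v' : Fin n → ℤ)
    (hv' : (4 * ∑ i, v' i) ≡ 4 * v [ZMOD (2 ^ (m + 2) : ℕ)])
    (M : Fin n → ℤ)
    (hM : ∀ i, M i = ((4 * v' i - 2 * y i - 1) % 2 ^ (m + 2)
        + (2 * x i + 1) * (2 * y i + 1)) % 2 ^ (m + 2)) :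
    (4 : ℤ) ∣ ((∑ i, (M i - 2 * x i)) % 2 ^ (m + 2)) ∧
      ((∑ i, (M i - 2 * x i)) % 2 ^ (m + 2)) / 4 = (v + ∑ i, x i * y i) % 2 ^ m := by
  have hcast : ((2 ^ (m + 2) : ℕ) : ℤ) = 2 ^ (m + 2) := by push_cast; ring
  have h1 : ∀ i, M i - 2 * x i ≡ 4 * v' i + 4 * (x i * y i) [ZMOD (2 ^ (m + 2) : ℕ)] := by
    intro i
    have e1 : (4 * v' i - 2 * y i - 1) % 2 ^ (m + 2)
        ≡ 4 * v' i - 2 * y i - 1 [ZMOD (2 ^ (m + 2) : ℕ)] := by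
      rw [Int.ModEq, hcast]
      exact Int.emod_emod_of_dvd _ dvd_rfl
    have e2 : M i ≡ (4 * v' i - 2 * y i - 1) % 2 ^ (m + 2)
        + (2 * x i + 1) * (2 * y i + 1) [ZMOD (2 ^ (m + 2) : ℕ)] := by
      rw [hM i, Int.ModEq, hcast]
      exact Int.emod_emod_of_dvd _ dvd_rfl
    have := (e2.trans (e1.add_right _)).sub_right (2 * x i)
    calc M i - 2 * x i ≡ (4 * v' i - 2 * y i - 1) + (2 * x i + 1) * (2 * y i + 1) - 2 * x i
        [ZMOD (2 ^ (m + 2) : ℕ)] := this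
      _ = 4 * v' i + 4 * (x i * y i) := by ring
  have hsum : (∑ i, (M i - 2 * x i)) ≡ 4 * (v + ∑ i, x i * y i)
      [ZMOD (2 ^ (m + 2) : ℕ)] := by
    have hs : (∑ i, (M i - 2 * x i)) ≡ ∑ i, (4 * v' i + 4 * (x i * y i))
        [ZMOD (2 ^ (m + 2) : ℕ)] := by
      rw [Int.ModEq, Finset.sum_int_mod, Finset.sum_int_mod (f := fun i => 4 * v' i + 4 * (x i * y i))]
      congr 1
      exact Finset.sum_congr rfl (fun i _ => h1 i)
    have he : ∑ i, (4 * v' i + 4 * (x i * y i))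
        = 4 * (∑ i, v' i) + 4 * ∑ i, x i * y i := by
      rw [Finset.sum_add_distrib, ← Finset.mul_sum, ← Finset.mul_sum]
    rw [he] at hs
    calc (∑ i, (M i - 2 * x i)) ≡ 4 * (∑ i, v' i) + 4 * ∑ i, x i * y i
        [ZMOD (2 ^ (m + 2) : ℕ)] := hs
      _ ≡ 4 * v + 4 * ∑ i, x i * y i [ZMOD (2 ^ (m + 2) : ℕ)] := hv'.add_right _
      _ = 4 * (v + ∑ i, x i * y i) := by ring
  have hmod : (∑ i, (M i - 2 * x i)) % 2 ^ (m + 2)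
      = 4 * ((v + ∑ i, x i * y i) % 2 ^ m) := by
    have := hsum
    rw [Int.ModEq, hcast] at this
    rw [this]
    have hD : (2 : ℤ) ^ (m + 2) = 4 * 2 ^ m := by ring
    rw [hD, Int.mul_emod_mul_of_pos _ _ (by norm_num : (0:ℤ) < 4)]
  refine ⟨⟨_, hmod⟩, ?_⟩
  rw [hmod, Int.mul_ediv_cancel_left _ (by norm_num)]
end

section
/- Let D = 2^d, d ≥ 2. Fix odd k₁,k₂,k₃ ∈ {0,...,D−1} and x ∈ {0,...,2^{d−2}−1}, and set p = 2x+1. The map sending (j, c₁, c₂, c₃, c₄) with j,c₁,c₂,c₄ ∈ {0,...,D−1} and c₃ odd, to the tuple (b₁,b₂,b₃,r₃,r₄) = ((j+c₁) mod D, (j·p+c₂) mod D, (j·c₃+c₄) mod D, (k₁+p·k₂+c₃·k₃)^{-1} mod D, (c₁ − (k₁c₁+k₂c₂+k₃c₄)·r₃) mod D) has image of cardinality exactly D⁴/2, and each point in the image has exactly D preimages. -/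
open Finset

lemma natCast_zmod2_one (n : ℕ) : Odd n ↔ (n : ZMod 2) = 1 := by
  rw [Nat.odd_iff, ← ZMod.natCast_mod]
  have h : n % 2 = 0 ∨ n % 2 = 1 := by omega
  rcases h with h | h <;> rw [h] <;> simp

lemma isUnit_iff_odd (d : ℕ) (hd : 1 ≤ d) (a : ZMod (2^d)) : IsUnit a ↔ Odd a.val := by
  haveI : NeZero (2^d) := ⟨by positivity⟩
  conv_lhs => rw [← ZMod.natCast_rightInverse a]
  rw [ZMod.isUnit_iff_coprime, Nat.coprime_pow_right_iff (by omega), Nat.coprime_two_right]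

lemma inv_inj_of_unit {n : ℕ} {a b : ZMod n} (ha : IsUnit a) (hb : IsUnit b)
    (h : a⁻¹ = b⁻¹) : a = b := by
  have h1 := ZMod.mul_inv_of_unit a ha
  have h2 := ZMod.inv_mul_of_unit b hb
  calc a = a * (b⁻¹ * b) := by rw [h2, mul_one]
    _ = (a * a⁻¹) * b := by rw [← h]; ring
    _ = b := by rw [h1, one_mul]

lemma card_odd_range (m : ℕ) : ((Finset.range (2*m)).filter (fun n => Odd n)).card = m := by
  have h : ((Finset.range (2*m)).filter (fun n => Odd n)).card = (Finset.range m).card := by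
    apply Finset.card_bij' (fun n _ => n / 2) (fun n _ => 2*n+1) <;>
      (intro a ha; simp only [Finset.mem_filter, Finset.mem_range, Nat.odd_iff] at ha ⊢) <;> omega
  rw [h, Finset.card_range]

theorem forgery_map_image_card
    (d : ℕ) (hd : 2 ≤ d)
    (k₁ k₂ k₃ : ℕ) (hk₁ : Odd k₁) (hk₂ : Odd k₂) (hk₃ : Odd k₃)
    (x : ℕ) (hx : x < 2 ^ (d - 2)) (p : ℕ) (hp : p = 2 * x + 1)
    (F : (ZMod (2 ^ d) × ZMod (2 ^ d) × ZMod (2 ^ d) × ZMod (2 ^ d) × ZMod (2 ^ d)) →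
      (ZMod (2 ^ d) × ZMod (2 ^ d) × ZMod (2 ^ d) × ZMod (2 ^ d) × ZMod (2 ^ d)))
    (hF : ∀ j c₁ c₂ c₃ c₄ : ZMod (2 ^ d),
      F (j, c₁, c₂, c₃, c₄) =
        (j + c₁, j * (p : ZMod (2 ^ d)) + c₂, j * c₃ + c₄,
          ((k₁ : ZMod (2 ^ d)) + (p : ZMod (2 ^ d)) * k₂ + c₃ * k₃)⁻¹,
          c₁ - ((k₁ : ZMod (2 ^ d)) * c₁ + (k₂ : ZMod (2 ^ d)) * c₂ +
              (k₃ : ZMod (2 ^ d)) * c₄) *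
            ((k₁ : ZMod (2 ^ d)) + (p : ZMod (2 ^ d)) * k₂ + c₃ * k₃)⁻¹))
    (Dom : Finset (ZMod (2 ^ d) × ZMod (2 ^ d) × ZMod (2 ^ d) × ZMod (2 ^ d) × ZMod (2 ^ d)))
    (hDom : Dom = Finset.univ.filter (fun z => Odd (z.2.2.2.1.val))) :
    (Dom.image F).card = (2 ^ d) ^ 4 / 2 ∧
      ∀ w ∈ Dom.image F, (Dom.filter (fun z => F z = w)).card = 2 ^ d := by
  haveI : NeZero (2^d) := ⟨by positivity⟩
  have hd1 : 1 ≤ d := by omega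
  have hpodd : Odd p := by rw [Nat.odd_iff]; omega
  -- casts of odd naturals are 1 in ZMod 2
  have cast2 : ∀ k : ℕ, Odd k → (k : ZMod 2) = 1 := fun k hk => (natCast_zmod2_one k).mp hk
  -- key unit fact
  have key : ∀ c₃ : ZMod (2^d), Odd c₃.val →
      IsUnit ((k₁ : ZMod (2 ^ d)) + (p : ZMod (2 ^ d)) * k₂ + c₃ * k₃) := by
    intro c₃ hc₃
    rw [isUnit_iff_odd d hd1, natCast_zmod2_one]
    have hdvd : (2 : ℕ) ∣ 2^d := dvd_pow_self 2 (by omega)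
    rw [ZMod.natCast_val, ← ZMod.castHom_apply (h := hdvd) (R := ZMod 2)]
    rw [map_add, map_add, map_mul, map_mul, map_natCast, map_natCast, map_natCast, map_natCast]
    rw [ZMod.castHom_apply, ← ZMod.natCast_val, (natCast_zmod2_one _).mp hc₃]
    rw [cast2 k₁ hk₁, cast2 k₂ hk₂, cast2 k₃ hk₃, cast2 p hpodd]
    decide
  have hK₃ : IsUnit (k₃ : ZMod (2^d)) := by
    rw [ZMod.isUnit_iff_coprime, Nat.coprime_pow_right_iff (by omega), Nat.coprime_two_right]
    exact hk₃
  -- fiber claim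
  have hfiber : ∀ w ∈ Dom.image F, (Dom.filter (fun z => F z = w)).card = 2 ^ d := by
    intro w hw
    obtain ⟨z₀, hz₀, hz₀w⟩ := Finset.mem_image.mp hw
    obtain ⟨j₀, c₁₀, c₂₀, c₃₀, c₄₀⟩ := z₀
    have ho : Odd c₃₀.val := by
      rw [hDom] at hz₀; exact (Finset.mem_filter.mp hz₀).2
    have hs := key c₃₀ ho
    have hsinv : ((k₁ : ZMod (2 ^ d)) + (p : ZMod (2 ^ d)) * k₂ + c₃₀ * k₃) *
        ((k₁ : ZMod (2 ^ d)) + (p : ZMod (2 ^ d)) * k₂ + c₃₀ * k₃)⁻¹ = 1 :=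
      ZMod.mul_inv_of_unit _ hs
    rw [hF] at hz₀w
    set b₁ := j₀ + c₁₀ with hb₁
    set b₂ := j₀ * (p : ZMod (2^d)) + c₂₀ with hb₂
    set b₃ := j₀ * c₃₀ + c₄₀ with hb₃
    set G : ZMod (2^d) → (ZMod (2 ^ d) × ZMod (2 ^ d) × ZMod (2 ^ d) × ZMod (2 ^ d) × ZMod (2 ^ d)) :=
      fun j => (j, b₁ - j, b₂ - j * (p : ZMod (2^d)), c₃₀, b₃ - j * c₃₀) with hG
    have hset : Dom.filter (fun z => F z = w) = Finset.univ.image G := by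
      ext z
      obtain ⟨jz, c₁, c₂, c₃, c₄⟩ := z
      simp only [Finset.mem_filter, Finset.mem_image, Finset.mem_univ, true_and, hDom]
      constructor
      · rintro ⟨hodd, hFz⟩
        rw [hF, ← hz₀w] at hFz
        simp only [Prod.mk.injEq] at hFz
        obtain ⟨e1, e2, e3, e4, e5⟩ := hFz
        have hc₃ : c₃ = c₃₀ := by
          have hsum := inv_inj_of_unit (key c₃ hodd) hs e4
          have h' : c₃ * (k₃ : ZMod (2^d)) = c₃₀ * (k₃ : ZMod (2^d)) := by
            linear_combination hsum
          have hk3inv := ZMod.mul_inv_of_unit (k₃ : ZMod (2^d)) hK₃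
          calc c₃ = c₃ * ((k₃ : ZMod (2^d)) * (k₃ : ZMod (2^d))⁻¹) := by rw [hk3inv, mul_one]
            _ = (c₃ * (k₃ : ZMod (2^d))) * (k₃ : ZMod (2^d))⁻¹ := by ring
            _ = (c₃₀ * (k₃ : ZMod (2^d))) * (k₃ : ZMod (2^d))⁻¹ := by rw [h']
            _ = c₃₀ := by rw [mul_assoc, hk3inv, mul_one]
        refine ⟨jz, ?_⟩
        rw [hG]
        simp only [Prod.mk.injEq]
        refine ⟨trivial, by linear_combination -e1, by linear_combination -e2, hc₃.symm, ?_⟩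
        rw [hc₃] at e3
        linear_combination -e3
      · rintro ⟨j, hj⟩
        rw [hG] at hj
        simp only [Prod.mk.injEq] at hj
        obtain ⟨h1, h2, h3, h4, h5⟩ := hj
        subst h1 h2 h3 h5
        subst h4
        refine ⟨ho, ?_⟩
        rw [hF, ← hz₀w]
        simp only [Prod.mk.injEq]
        refine ⟨by ring, by ring, by ring, trivial, ?_⟩
        linear_combination (j - j₀) * hsinv
    rw [hset, Finset.card_image_of_injective _ (fun a b h => congrArg Prod.fst h),
      Finset.card_univ, ZMod.card]
  refine ⟨?_, hfiber⟩
  -- count the filtered set of odd elements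
  have hS : (Finset.univ.filter (fun c : ZMod (2^d) => Odd c.val)).card = 2^(d-1) := by
    have h2 : (2:ℕ)^d = 2 * 2^(d-1) := by
      rw [← pow_succ']; congr 1; omega
    have hb : (Finset.univ.filter (fun c : ZMod (2^d) => Odd c.val)).card =
        ((Finset.range (2^d)).filter (fun n => Odd n)).card := by
      refine Finset.card_bij' (fun c _ => c.val) (fun n _ => (n : ZMod (2^d))) ?_ ?_ ?_ ?_
      · intro a ha
        simp only [Finset.mem_filter, Finset.mem_univ, true_and] at ha
        simp only [Finset.mem_filter, Finset.mem_range]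
        exact ⟨a.val_lt, ha⟩
      · intro n hn
        simp only [Finset.mem_filter, Finset.mem_range] at hn
        simp only [Finset.mem_filter, Finset.mem_univ, true_and]
        rw [ZMod.val_natCast_of_lt hn.1]; exact hn.2
      · intro a _
        exact ZMod.natCast_rightInverse a
      · intro n hn
        simp only [Finset.mem_filter, Finset.mem_range] at hn
        exact ZMod.val_natCast_of_lt hn.1
    rw [hb, h2, card_odd_range]
  -- cardinality of Dom
  have hDomcard : Dom.card = 2^(5*d-1) := by
    have hprod : Dom = Finset.univ ×ˢ Finset.univ ×ˢ Finset.univ ×ˢ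
        (Finset.univ.filter (fun c : ZMod (2^d) => Odd c.val)) ×ˢ Finset.univ := by
      rw [hDom]; ext z
      simp [Finset.mem_product]
    rw [hprod]
    simp only [Finset.card_product, hS, Finset.card_univ, ZMod.card]
    rw [← pow_add, ← pow_add, ← pow_add, ← pow_add]
    congr 1; omega
  have hsum : Dom.card = (Dom.image F).card * 2^d := by
    rw [Finset.card_eq_sum_card_fiberwise (fun z hz => Finset.mem_image_of_mem F hz),
      Finset.sum_congr rfl hfiber, Finset.sum_const, smul_eq_mul]
  have himg : (Dom.image F).card * 2^d = 2^(4*d-1) * 2^d := by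
    rw [← hsum, hDomcard, ← pow_add]; congr 1; omega
  have hcard := Nat.eq_of_mul_eq_mul_right (by positivity : 0 < 2^d) himg
  rw [hcard]
  have h4 : ((2:ℕ)^d) ^ 4 = 2^(4*d-1) * 2 := by
    rw [← pow_mul, ← pow_succ]; congr 1; omega
  rw [h4, Nat.mul_div_cancel _ (by omega)]
end
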